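/- Let n, m, m̃, ñ be positive integers, Φ ∈ ℝ^{n×m} with rows φ_{ℓ,:}, μ ∈ ℝ^m, C ∈ ℝ^{m×m}, and for each ℓ ∈ {1,…,n} let g_ℓ : ℝ → (0,∞) be a function such that log g_ℓ is concave. Let z ∼ N(0,1), let ĩ, j̃, r̃ ∈ {1,…,m}^{m̃} have i.i.d. uniform entries, let ℓ̃ ∈ {1,…,n}^{ñ} have i.i.d. uniform entries, all mutually independent, and assume the relevant expectations exist. Then Σ_{ℓ=1}^n E_{z}[ log g_ℓ( φ_{ℓ,:}μ + z·φ_{ℓ,:}CCᵀφ_{ℓ,:}ᵀ ) ] ≥ (n/ñ) · E_{z, ℓ̃, ĩ, j̃, r̃}[ Σ_{ℓ ∈ ℓ̃} log g_ℓ( (m/m̃) φ_{ℓ,ĩ} μ_{ĩ} + (m³/m̃³) z · φ_{ℓ,j̃} C_{j̃,r̃} C_{ĩ,r̃}ᵀ φ_{ℓ,ĩ}ᵀ ) ]. -/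

import Mathlib

/-!
Each coordinate of a uniformly random index vector is uniform, so averaging the subsampled
argument `(m/m̃) φ_{ℓ,ĩ}μ_ĩ + (m³/m̃³) z φ_{ℓ,j̃}C_{j̃,r̃}C_{ĩ,r̃}ᵀφ_{ℓ,ĩ}ᵀ` over `ĩ, j̃, r̃` returns
`φ_{ℓ,:}μ + z φ_{ℓ,:}CCᵀφ_{ℓ,:}ᵀ`: the linear term is a sum of `m̃` uniform samples, the cubic one a
triple sum over three independent index vectors. Jensen's inequality for the concave `log g_ℓ`
then bounds the average of the logarithms by the logarithm at the exact argument, for every `z`.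
The same marginal computation turns the `ℓ̃`-average of `Σ_{ℓ∈ℓ̃}` into `(ñ/n) Σ_ℓ`, and
integrating in `z` gives the inequality.
-/

open Matrix BigOperators MeasureTheory ProbabilityTheory Finset

section UniformIndices
variable {ι α β γ M : Type*} [Fintype ι] [DecidableEq ι] [Fintype α] [Fintype β] [Fintype γ]
  [AddCommMonoid M] [Module ℚ≥0 M]

theorem Fintype.expect_fun_apply (a : ι) (h : α → M) :
    𝔼 f : ι → α, h (f a) = 𝔼 x, h x := by
  cases isEmpty_or_nonempty α
  · have : IsEmpty (ι → α) := ⟨fun f => isEmptyElim (f a)⟩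
    simp [Finset.univ_eq_empty]
  · rw [Fintype.expect_equiv (Equiv.funSplitAt a α) (fun f => h (f a)) (fun p => h p.1)
      (fun _ => rfl), ← univ_product_univ, expect_product' univ univ (fun x _ => h x)]
    simp

theorem Fintype.expect_fun_sum_apply (h : α → M) :
    𝔼 f : ι → α, ∑ a, h (f a) = Fintype.card ι • 𝔼 x, h x := by
  rw [expect_sum_comm]
  simp [Fintype.expect_fun_apply]

theorem Fintype.expect_fun_sum_sum_sum_apply (T : α → β → γ → M) :
    𝔼 f : ι → α, 𝔼 g : ι → β, 𝔼 k : ι → γ, ∑ a, ∑ b, ∑ c, T (f a) (g b) (k c)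
      = Fintype.card ι ^ 3 • 𝔼 x, 𝔼 y, 𝔼 w, T x y w := by
  have marginal : ∀ a b c, 𝔼 f : ι → α, 𝔼 g : ι → β, 𝔼 k : ι → γ, T (f a) (g b) (k c)
      = 𝔼 x, 𝔼 y, 𝔼 w, T x y w := by
    intro a b c
    rw [Fintype.expect_fun_apply a (fun x => 𝔼 g : ι → β, 𝔼 k : ι → γ, T x (g b) (k c))]
    refine expect_congr rfl fun x _ => ?_
    rw [Fintype.expect_fun_apply b (fun y => 𝔼 k : ι → γ, T x y (k c))]
    exact expect_congr rfl fun y _ => Fintype.expect_fun_apply c (T x y)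
  simp only [expect_sum_comm, marginal, sum_const, card_univ, smul_smul]
  ring_nf

theorem Fintype.expect_fun_dotProduct_comp [Nonempty ι] (u v : α → ℝ) :
    (Fintype.card α / Fintype.card ι : ℝ) * 𝔼 f : ι → α, (u ∘ f) ⬝ᵥ (v ∘ f) = u ⬝ᵥ v := by
  have hι : (Fintype.card ι : ℝ) ≠ 0 := Nat.cast_ne_zero.mpr Fintype.card_ne_zero
  simp only [dotProduct, Function.comp_apply]
  rw [Fintype.expect_fun_sum_apply (fun x => u x * v x), nsmul_eq_mul, ← Fintype.card_mul_expect]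
  field_simp

theorem Fintype.expect_fun_dotProduct_submatrix_mulVec [Nonempty ι] (u : α → ℝ) (v : β → ℝ)
    (A : Matrix α γ ℝ) (B : Matrix β γ ℝ) :
    (Fintype.card α * Fintype.card β * Fintype.card γ / Fintype.card ι ^ 3 : ℝ) *
        𝔼 ii : ι → β, 𝔼 jj : ι → α, 𝔼 rr : ι → γ,
          (u ∘ jj) ⬝ᵥ (A.submatrix jj rr * (B.submatrix ii rr)ᵀ) *ᵥ (v ∘ ii)
      = u ⬝ᵥ (A * Bᵀ) *ᵥ v := by
  have hι : (Fintype.card ι : ℝ) ≠ 0 := Nat.cast_ne_zero.mpr Fintype.card_ne_zero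
  -- An opaque `T` lets `Fintype.expect_fun_sum_sum_sum_apply` match by first-order unification.
  obtain ⟨T, hT⟩ : ∃ T : β → α → γ → ℝ, ∀ y x w, T y x w = v y * u x * A x w * B y w :=
    ⟨_, fun _ _ _ => rfl⟩
  have expand : ∀ (ii : ι → β) (jj : ι → α) (rr : ι → γ),
      (u ∘ jj) ⬝ᵥ (A.submatrix jj rr * (B.submatrix ii rr)ᵀ) *ᵥ (v ∘ ii)
        = ∑ b', ∑ b, ∑ c, T (ii b') (jj b) (rr c) := by
    intro ii jj rr
    simp only [dotProduct, mulVec, mul_apply, submatrix_apply, transpose_apply,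
      Function.comp_apply, mul_sum, sum_mul, hT]
    rw [sum_comm]
    exact Finset.sum_congr rfl fun _ _ => Finset.sum_congr rfl fun _ _ =>
      Finset.sum_congr rfl fun _ _ => by ring
  simp only [expand]
  rw [Fintype.expect_fun_sum_sum_sum_apply T]
  calc _ = (Fintype.card β : ℝ) * 𝔼 y, (Fintype.card α : ℝ) * 𝔼 x,
        (Fintype.card γ : ℝ) * 𝔼 w, T y x w := by
        simp only [mul_expect, nsmul_eq_mul, Nat.cast_pow]
        refine expect_congr rfl fun _ _ => expect_congr rfl fun _ _ => expect_congr rfl fun _ _ => ?_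
        field_simp
    _ = ∑ y, ∑ x, ∑ w, T y x w := by simp only [Fintype.card_mul_expect]
    _ = u ⬝ᵥ (A * Bᵀ) *ᵥ v := by
        simp only [dotProduct, mulVec, mul_apply, transpose_apply, mul_sum, sum_mul, hT]
        rw [sum_comm]
        exact Finset.sum_congr rfl fun _ _ => Finset.sum_congr rfl fun _ _ =>
          Finset.sum_congr rfl fun _ _ => by ring

end UniformIndices

theorem Fintype.expect_expect_expect_expect_eq_sum_div_card {α β γ δ : Type*} [Fintype α]
    [Fintype β] [Fintype γ] [Fintype δ] (f : α → β → γ → δ → ℝ) :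
    𝔼 a, 𝔼 b, 𝔼 c, 𝔼 d, f a b c d
      = (∑ a, ∑ b, ∑ c, ∑ d, f a b c d) /
          ((Fintype.card α : ℝ) * Fintype.card β * Fintype.card γ * Fintype.card δ) := by
  simp only [Fintype.expect_eq_sum_div_card, sum_div, div_div]
  exact Finset.sum_congr rfl fun _ _ => Finset.sum_congr rfl fun _ _ =>
    Finset.sum_congr rfl fun _ _ => Finset.sum_congr rfl fun _ _ => by ring_nf

theorem ConcaveOn.expect_le_map {ι : Type*} {s : Set ℝ} {f : ℝ → ℝ} (hf : ConcaveOn ℝ s f)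
    {t : Finset ι} (ht : t.Nonempty) {p : ι → ℝ} (hp : ∀ i ∈ t, p i ∈ s) :
    𝔼 i ∈ t, f (p i) ≤ f (𝔼 i ∈ t, p i) := by
  have hw : ∑ _i ∈ t, ((#t : ℝ))⁻¹ = 1 := by
    rw [sum_const, nsmul_eq_mul, mul_inv_cancel₀ (Nat.cast_ne_zero.mpr ht.card_ne_zero)]
  simpa only [expect_eq_sum_div_card, div_eq_inv_mul, smul_eq_mul, mul_sum] using
    hf.le_map_sum (fun _ _ => by positivity) hw hp

section Estimator

variable {m m' : ℕ}

noncomputable def subsampledSiteArg (ii jj rr : Fin m' → Fin m) (φ μ : Fin m → ℝ)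
    (C : Matrix (Fin m) (Fin m) ℝ) (z : ℝ) : ℝ :=
  ((m : ℝ) / m') * ((φ ∘ ii) ⬝ᵥ (μ ∘ ii))
    + ((m : ℝ) ^ 3 / (m' : ℝ) ^ 3) * z *
      ((φ ∘ jj) ⬝ᵥ (C.submatrix jj rr * (C.submatrix ii rr)ᵀ) *ᵥ (φ ∘ ii))

theorem expect_subsampledSiteArg (hm : 0 < m) (hm' : 0 < m') (φ μ : Fin m → ℝ)
    (C : Matrix (Fin m) (Fin m) ℝ) (z : ℝ) :
    𝔼 ii : Fin m' → Fin m, 𝔼 jj : Fin m' → Fin m, 𝔼 rr : Fin m' → Fin m,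
      subsampledSiteArg ii jj rr φ μ C z
      = φ ⬝ᵥ μ + z * (φ ⬝ᵥ (C * Cᵀ) *ᵥ φ) := by
  have := Fin.pos_iff_nonempty.mp hm
  have := Fin.pos_iff_nonempty.mp hm'
  have linear := Fintype.expect_fun_dotProduct_comp (ι := Fin m') φ μ
  have quadratic := Fintype.expect_fun_dotProduct_submatrix_mulVec (ι := Fin m') φ φ C C
  simp only [Fintype.card_fin] at linear quadratic
  simp only [subsampledSiteArg, expect_add_distrib, Fintype.expect_const, ← mul_expect]
  rw [linear, mul_assoc, mul_comm z, ← mul_assoc, ← quadratic]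
  ring

theorem ConcaveOn.expect_map_subsampledSiteArg_le {G : ℝ → ℝ} (hG : ConcaveOn ℝ Set.univ G)
    (hm : 0 < m) (hm' : 0 < m') (φ μ : Fin m → ℝ) (C : Matrix (Fin m) (Fin m) ℝ) (z : ℝ) :
    𝔼 ii : Fin m' → Fin m, 𝔼 jj : Fin m' → Fin m, 𝔼 rr : Fin m' → Fin m,
      G (subsampledSiteArg ii jj rr φ μ C z)
      ≤ G (φ ⬝ᵥ μ + z * (φ ⬝ᵥ (C * Cᵀ) *ᵥ φ)) := by
  have := Fin.pos_iff_nonempty.mp hm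
  rw [← expect_subsampledSiteArg hm hm']
  simp only [← expect_product', univ_product_univ]
  exact hG.expect_le_map univ_nonempty fun _ _ => Set.mem_univ _

theorem mul_average_subsampled_le {n n' : ℕ} (hm : 0 < m) (hm' : 0 < m') (hn' : 0 < n')
    (Φ : Matrix (Fin n) (Fin m) ℝ) (μ : Fin m → ℝ) (C : Matrix (Fin m) (Fin m) ℝ)
    (G : Fin n → ℝ → ℝ) (hG : ∀ ℓ, ConcaveOn ℝ Set.univ (G ℓ)) (z : ℝ) :
    ((n : ℝ) / n') *
        ((∑ ii : Fin m' → Fin m, ∑ jj : Fin m' → Fin m, ∑ rr : Fin m' → Fin m,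
            ∑ ll : Fin n' → Fin n, ∑ a : Fin n',
              G (ll a) (subsampledSiteArg ii jj rr (Φ (ll a)) μ C z)) /
          ((Fintype.card (Fin m' → Fin m) : ℝ) * Fintype.card (Fin m' → Fin m) *
            Fintype.card (Fin m' → Fin m) * Fintype.card (Fin n' → Fin n)))
      ≤ ∑ ℓ, G ℓ (Φ ℓ ⬝ᵥ μ + z * (Φ ℓ ⬝ᵥ (C * Cᵀ) *ᵥ Φ ℓ)) := by
  obtain ⟨H, hH⟩ : ∃ H : (Fin m' → Fin m) → (Fin m' → Fin m) → (Fin m' → Fin m) → Fin n → ℝ,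
      ∀ ii jj rr ℓ, H ii jj rr ℓ = G ℓ (subsampledSiteArg ii jj rr (Φ ℓ) μ C z) :=
    ⟨_, fun _ _ _ _ => rfl⟩
  have hn'R : (n' : ℝ) ≠ 0 := Nat.cast_ne_zero.mpr hn'.ne'
  simp only [← hH, ← Fintype.expect_expect_expect_expect_eq_sum_div_card,
    Fintype.expect_fun_sum_apply, Fintype.card_fin, nsmul_eq_mul, mul_expect]
  calc 𝔼 ii, 𝔼 jj, 𝔼 rr, 𝔼 ℓ, (n : ℝ) / n' * (n' * H ii jj rr ℓ)
      = 𝔼 ii, 𝔼 jj, 𝔼 rr, ∑ ℓ, H ii jj rr ℓ := by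
        refine expect_congr rfl fun ii _ => expect_congr rfl fun jj _ =>
          expect_congr rfl fun rr _ => ?_
        rw [← Fintype.card_mul_expect, Fintype.card_fin, mul_expect]
        exact expect_congr rfl fun ℓ _ => by field_simp
    _ = ∑ ℓ, 𝔼 ii, 𝔼 jj, 𝔼 rr, H ii jj rr ℓ := by simp only [expect_sum_comm]
    _ ≤ _ := Finset.sum_le_sum fun ℓ _ => by
        simpa only [hH] using (hG ℓ).expect_map_subsampledSiteArg_le hm hm' (Φ ℓ) μ C z

end Estimator

theorem elbo_lower_bound_estimator_general
    (n m m' n' : ℕ) (hm : 0 < m) (hm' : 0 < m') (hn' : 0 < n')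
    (Φ : Matrix (Fin n) (Fin m) ℝ) (μ : Fin m → ℝ) (C : Matrix (Fin m) (Fin m) ℝ)
    (g : Fin n → ℝ → ℝ)
    (hgconc : ∀ ℓ : Fin n, ConcaveOn ℝ Set.univ (fun x => Real.log (g ℓ x)))
    (hInt1 : ∀ ℓ : Fin n,
      Integrable (fun z : ℝ =>
        Real.log (g ℓ ((fun k => Φ ℓ k) ⬝ᵥ μ
          + z * ((fun k => Φ ℓ k) ⬝ᵥ (C * Cᵀ) *ᵥ (fun k => Φ ℓ k)))))
        (gaussianReal 0 1))
    (hInt2 : ∀ (ii jj rr : Fin m' → Fin m) (ℓ : Fin n),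
      Integrable (fun z : ℝ =>
        Real.log (g ℓ
          (((m : ℝ) / m') * ((fun b => Φ ℓ (ii b)) ⬝ᵥ (μ ∘ ii))
            + ((m : ℝ) ^ 3 / (m' : ℝ) ^ 3) * z *
              ((fun b => Φ ℓ (jj b)) ⬝ᵥ
                (C.submatrix jj rr * (C.submatrix ii rr)ᵀ) *ᵥ (fun b => Φ ℓ (ii b))))))
        (gaussianReal 0 1)) :
    (∑ ℓ : Fin n, ∫ z : ℝ,
        Real.log (g ℓ ((fun k => Φ ℓ k) ⬝ᵥ μ
          + z * ((fun k => Φ ℓ k) ⬝ᵥ (C * Cᵀ) *ᵥ (fun k => Φ ℓ k))))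
        ∂(gaussianReal 0 1))
    ≥ ((n : ℝ) / n') *
      ∫ z : ℝ,
        (∑ ii : Fin m' → Fin m, ∑ jj : Fin m' → Fin m, ∑ rr : Fin m' → Fin m,
          ∑ ll : Fin n' → Fin n, ∑ a : Fin n',
            Real.log (g (ll a)
              (((m : ℝ) / m') * ((fun b => Φ (ll a) (ii b)) ⬝ᵥ (μ ∘ ii))
                + ((m : ℝ) ^ 3 / (m' : ℝ) ^ 3) * z *
                  ((fun b => Φ (ll a) (jj b)) ⬝ᵥ
                    (C.submatrix jj rr * (C.submatrix ii rr)ᵀ) *ᵥ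
                      (fun b => Φ (ll a) (ii b))))))
          / ((Fintype.card (Fin m' → Fin m) : ℝ) * (Fintype.card (Fin m' → Fin m)) *
              (Fintype.card (Fin m' → Fin m)) * (Fintype.card (Fin n' → Fin n)))
        ∂(gaussianReal 0 1) := by
  rw [ge_iff_le, ← integral_const_mul, ← integral_finsetSum _ fun ℓ _ => hInt1 ℓ]
  refine integral_mono ?_ (integrable_finsetSum _ fun ℓ _ => hInt1 ℓ) fun z =>
    mul_average_subsampled_le hm hm' hn' Φ μ C (fun ℓ x => Real.log (g ℓ x)) hgconc z
  refine ((integrable_finsetSum _ fun ii _ => integrable_finsetSum _ fun jj _ =>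
    integrable_finsetSum _ fun rr _ => integrable_finsetSum _ fun ll _ =>
      integrable_finsetSum _ fun a _ => hInt2 ii jj rr (ll a)).div_const _).const_mul _

/-- Theorem 3 of the paper: for log-concave site projections `g_ℓ`, the
quadruply stochastic estimator lower-bounds the expected log-likelihood term of the ELBO:
`Σ_ℓ E_z[log g_ℓ(φ_ℓμ + z φ_ℓ CCᵀ φ_ℓᵀ)] ≥ (n/ñ) E[Σ_{ℓ∈ℓ̃} log g_ℓ((m/m̃)φ_{ℓ,ĩ}μ_ĩ +
(m³/m̃³) z φ_{ℓ,j̃} C_{j̃,r̃} C_{ĩ,r̃}ᵀ φ_{ℓ,ĩ}ᵀ)]`.  Here `m'` plays the role of `m̃` and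
`n'` of `ñ`; `z ∼ N(0,1)`, and the expectation over the mutually independent i.i.d. uniform
index vectors is the uniform average over all index functions. -/
theorem elbo_lower_bound_estimator
    (n m m' n' : ℕ) (hn : 0 < n) (hm : 0 < m) (hm' : 0 < m') (hn' : 0 < n')
    (Φ : Matrix (Fin n) (Fin m) ℝ) (μ : Fin m → ℝ) (C : Matrix (Fin m) (Fin m) ℝ)
    (g : Fin n → ℝ → ℝ)
    (hgpos : ∀ (ℓ : Fin n) (x : ℝ), 0 < g ℓ x)
    (hgconc : ∀ ℓ : Fin n, ConcaveOn ℝ Set.univ (fun x => Real.log (g ℓ x)))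
    (hInt1 : ∀ ℓ : Fin n,
      Integrable (fun z : ℝ =>
        Real.log (g ℓ ((fun k => Φ ℓ k) ⬝ᵥ μ
          + z * ((fun k => Φ ℓ k) ⬝ᵥ (C * Cᵀ) *ᵥ (fun k => Φ ℓ k)))))
        (gaussianReal 0 1))
    (hInt2 : ∀ (ii jj rr : Fin m' → Fin m) (ℓ : Fin n),
      Integrable (fun z : ℝ =>
        Real.log (g ℓ
          (((m : ℝ) / m') * ((fun b => Φ ℓ (ii b)) ⬝ᵥ (μ ∘ ii))
            + ((m : ℝ) ^ 3 / (m' : ℝ) ^ 3) * z *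
              ((fun b => Φ ℓ (jj b)) ⬝ᵥ
                (C.submatrix jj rr * (C.submatrix ii rr)ᵀ) *ᵥ (fun b => Φ ℓ (ii b))))))
        (gaussianReal 0 1)) :
    (∑ ℓ : Fin n, ∫ z : ℝ,
        Real.log (g ℓ ((fun k => Φ ℓ k) ⬝ᵥ μ
          + z * ((fun k => Φ ℓ k) ⬝ᵥ (C * Cᵀ) *ᵥ (fun k => Φ ℓ k))))
        ∂(gaussianReal 0 1))
    ≥ ((n : ℝ) / n') *
      ∫ z : ℝ,
        (∑ ii : Fin m' → Fin m, ∑ jj : Fin m' → Fin m, ∑ rr : Fin m' → Fin m,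
          ∑ ll : Fin n' → Fin n, ∑ a : Fin n',
            Real.log (g (ll a)
              (((m : ℝ) / m') * ((fun b => Φ (ll a) (ii b)) ⬝ᵥ (μ ∘ ii))
                + ((m : ℝ) ^ 3 / (m' : ℝ) ^ 3) * z *
                  ((fun b => Φ (ll a) (jj b)) ⬝ᵥ
                    (C.submatrix jj rr * (C.submatrix ii rr)ᵀ) *ᵥ
                      (fun b => Φ (ll a) (ii b))))))
          / ((Fintype.card (Fin m' → Fin m) : ℝ) * (Fintype.card (Fin m' → Fin m)) *
              (Fintype.card (Fin m' → Fin m)) * (Fintype.card (Fin n' → Fin n)))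
        ∂(gaussianReal 0 1) :=
  elbo_lower_bound_estimator_general n m m' n' hm hm' hn' Φ μ C g hgconc hInt1 hInt2
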